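/- Let k((Γ)) be endowed with a series derivation of Hardy type d, Γ a subgroup of the Hahn group Σ_{φ∈Φ} ℝ, θ_φ := v(d(t_φ)/t_φ), and θ̃ := l.u.b.{θ_φ : φ ∈ Φ}. Then every series a ∈ k((Γ)) with v(a) > θ̃ admits an integral in k((Γ)); moreover, k((Γ)) is closed under integration (every element has an integral) if and only if θ̃ ∉ Γ. -/

import Mathlib

/- Common setting: a generalized series field `k((Γ))`, where the totally ordered abelian
group `Γ` is regarded, via Hahn's embedding theorem, as a subgroup of the Hahn group
`Σ_{φ ∈ Φ} ℝ = HahnSeries Φ ℝ`, and the coefficient field `k` contains the real exponents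
(via a ring homomorphism `ι : ℝ →+* k`). -/

open HahnSeries

noncomputable section

/-- Archimedean equivalence on an ordered abelian group. -/
def ArchEquiv {Γ : Type*} [AddCommGroup Γ] [LinearOrder Γ] [IsOrderedAddMonoid Γ] (x y : Γ) : Prop :=
  ∃ n : ℕ, |x| ≤ n • |y| ∧ |y| ≤ n • |x|

/-- Lexicographic positivity of a (generalized) Hahn series: the leading coefficient is
positive. -/
def LexPos {Φ : Type*} [LinearOrder Φ] {R : Type*} [Zero R] [PartialOrder R]
    (x : HahnSeries Φ R) : Prop :=
  ∃ φ, 0 < x.coeff φ ∧ ∀ ψ, ψ < φ → x.coeff ψ = 0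

/-- Lexicographic order relation. -/
def LexLe {Φ : Type*} [LinearOrder Φ] {R : Type*} [AddCommGroup R] [PartialOrder R]
    (x y : HahnSeries Φ R) : Prop :=
  x = y ∨ LexPos (y - x)

/-- The data of Hahn's embedding theorem: `Γ` is (identified with) a subgroup of the Hahn
group `Σ_{φ ∈ Φ} ℝ` ordered lexicographically, containing the characteristic functions
`1_φ = single φ 1`.  The natural valuation of `γ ∈ Γ` is `(e γ).orderTop`. -/
structure HahnEmbeddingData (Φ : Type*) [LinearOrder Φ]
    (Γ : Type*) [AddCommGroup Γ] [LinearOrder Γ] [IsOrderedAddMonoid Γ] where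
  e : Γ →+ HahnSeries Φ ℝ
  inj : Function.Injective e
  ord : ∀ γ : Γ, 0 < γ ↔ LexPos (e γ)
  b : Φ → Γ
  hb : ∀ φ, e (b φ) = HahnSeries.single φ 1

variable {Φ : Type*} [LinearOrder Φ] {Γ : Type*} [AddCommGroup Γ] [LinearOrder Γ] [IsOrderedAddMonoid Γ]
  {k : Type*} [Field k]

/-- The fundamental monomial `t_φ = t^{1_φ}` in `k((Γ))`. -/
def tmon (H : HahnEmbeddingData Φ Γ) (k : Type*) [Field k] (φ : Φ) : HahnSeries Γ k :=
  HahnSeries.single (H.b φ) 1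

/-- The logarithmic derivative `d(t_φ)/t_φ` of the fundamental monomial `t_φ`. -/
def logDer (H : HahnEmbeddingData Φ Γ) (D : HahnSeries Γ k → HahnSeries Γ k) (φ : Φ) :
    HahnSeries Γ k :=
  D (tmon H k φ) * (tmon H k φ)⁻¹

/-- A series derivation on `k((Γ))`: a derivation which is strongly linear
(`d(Σ a_α t^α) = Σ a_α d(t^α)`, the family being summable) and satisfies the strong
Leibniz rule (`d(t^α) = t^α Σ_φ α_φ d(t_φ)/t_φ`, the family being summable). -/
structure IsSeriesDerivation (H : HahnEmbeddingData Φ Γ) (ι : ℝ →+* k)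
    (D : HahnSeries Γ k → HahnSeries Γ k) : Prop where
  map_add : ∀ x y, D (x + y) = D x + D y
  leibniz : ∀ x y, D (x * y) = D x * y + x * D y
  strong_linear : ∀ x : HahnSeries Γ k, ∃ s : SummableFamily Γ k Γ,
    (∀ γ, s γ = x.coeff γ • D (HahnSeries.single γ 1)) ∧ D x = s.hsum
  strong_leibniz : ∀ γ : Γ, ∃ s : SummableFamily Γ k Φ,
    (∀ φ, s φ = ι ((H.e γ).coeff φ) • (HahnSeries.single γ 1 * logDer H D φ)) ∧
    D (HahnSeries.single γ 1) = s.hsum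

/-- (HD1): the valuation ring is `ker d + m_v`. -/
def HDone (D : HahnSeries Γ k → HahnSeries Γ k) : Prop :=
  {x : HahnSeries Γ k | 0 ≤ x.orderTop} =
    {x : HahnSeries Γ k | ∃ c m, D c = 0 ∧ 0 < HahnSeries.orderTop m ∧ x = c + m}

/-- (HD2): l'Hospital's rule. -/
def HDtwo (D : HahnSeries Γ k → HahnSeries Γ k) : Prop :=
  ∀ a b : HahnSeries Γ k, a ≠ 0 → b ≠ 0 → a.order ≠ 0 → b.order ≠ 0 →
    (a.orderTop ≤ b.orderTop ↔ (D a).orderTop ≤ (D b).orderTop)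

/-- (HD3): compatibility of the logarithmic derivative with the valuation. -/
def HDthree (D : HahnSeries Γ k → HahnSeries Γ k) : Prop :=
  ∀ a b : HahnSeries Γ k, a ≠ 0 → b ≠ 0 → |b.order| < |a.order| → 0 < |b.order| →
    (D a * a⁻¹).orderTop ≤ (D b * b⁻¹).orderTop ∧
      ((D a * a⁻¹).orderTop = (D b * b⁻¹).orderTop ↔ ArchEquiv a.order b.order)

/-- A series derivation of Hardy type on `k((Γ))`. -/
def IsHardySeriesDerivation (H : HahnEmbeddingData Φ Γ) (ι : ℝ →+* k)
    (D : HahnSeries Γ k → HahnSeries Γ k) : Prop :=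
  IsSeriesDerivation H ι D ∧ HDone D ∧ HDtwo D ∧ HDthree D

end

/-! Let `ψ(γ)` be the archimedean class of `γ ≠ 0` and `T(γ) = γ + θ_{ψ(γ)}`. The strong Leibniz
rule gives `v(d(t^γ)) = T(γ)`, and by (HD2) `v(d b) = T(v(b))` whenever `v(b) ≠ 0`, with `T`
strictly increasing. Hence an integral of `a` can be built term by term: if the error `a - d b`
has valuation `T(γ)`, adding a suitable `c t^γ` to `b` raises the valuation of the error, and
Zorn's lemma over truncations of series produces an exact integral, as long as every
`δ ≥ v(a)` lies in the image of `T`. By (HD3) `θ` is strictly increasing, and comparing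
`T(1_φ)` with `T(η + 1_φ)` via (HD2) shows that `θ_φ - θ_ψ` lies in classes beyond `ψ` for
`ψ < φ`; from this, `δ` is in the image of `T` unless `δ` is the least upper bound of the
`θ_φ`, which gives both assertions. -/

theorem WithTop.isLUB_range_coe {ι α : Type*} [Preorder α] {f : ι → α} {a : α}
    (h : IsLUB (Set.range f) a) : IsLUB (Set.range fun i => (f i : WithTop α)) a := by
  refine ⟨fun _ ⟨i, hi⟩ => hi ▸ WithTop.coe_le_coe.2 (h.1 ⟨i, rfl⟩), fun u hu => ?_⟩
  induction u using WithTop.recTopCoe with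
  | top => exact le_top
  | coe u =>
    exact WithTop.coe_le_coe.2 (h.2 fun _ ⟨i, hi⟩ => hi ▸ WithTop.coe_le_coe.1 (hu ⟨i, rfl⟩))

namespace HahnSeries

section Order

variable {Γ R : Type*} [LinearOrder Γ]

theorem orderTop_eq_of_coeff_ne_zero [Zero R] {x : HahnSeries Γ R} {g : Γ} (hg : x.coeff g ≠ 0)
    (hlt : ∀ i < g, x.coeff i = 0) : x.orderTop = g :=
  le_antisymm (orderTop_le_of_coeff_ne_zero hg)
    (le_orderTop_iff_forall.2 fun _ hi => hlt _ (WithTop.coe_lt_coe.1 hi))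

theorem lexPos_iff [Zero R] [PartialOrder R] {x : HahnSeries Γ R} :
    LexPos x ↔ 0 < x.leadingCoeff := by
  constructor
  · rintro ⟨φ, hpos, hlt⟩
    simpa [leadingCoeff, orderTop_eq_of_coeff_ne_zero hpos.ne' hlt] using hpos
  · intro h
    have hx : x ≠ 0 := leadingCoeff_ne_zero.1 h.ne'
    have htop : x.orderTop ≠ ⊤ := orderTop_ne_top.2 hx
    refine ⟨x.orderTop.untop htop, by rwa [coeff_untop_eq_leadingCoeff], fun ψ hψ => ?_⟩
    exact coeff_eq_zero_of_lt_orderTop ((WithTop.lt_untop_iff htop).1 hψ)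

theorem orderTop_smul_of_ne_zero {k : Type*} [Field k] {c : k} (hc : c ≠ 0)
    (x : HahnSeries Γ k) : (c • x).orderTop = x.orderTop := by
  refine le_antisymm ?_ (orderTop_le_orderTop_smul c x)
  calc (c • x).orderTop ≤ (c⁻¹ • c • x).orderTop := orderTop_le_orderTop_smul _ _
    _ = x.orderTop := by rw [inv_smul_smul₀ hc]

theorem leadingCoeff_smul {k : Type*} [Field k] (c : k) (x : HahnSeries Γ k) :
    (c • x).leadingCoeff = c * x.leadingCoeff := by
  rcases eq_or_ne c 0 with rfl | hc
  · simp
  cases h : x.orderTop with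
  | top => simp [orderTop_eq_top.1 h]
  | coe g => simp [leadingCoeff, orderTop_smul_of_ne_zero hc, h]

end Order

section Truncation

variable {Γ R : Type*} [LinearOrder Γ]

def IsTruncation [Zero R] (x y : HahnSeries Γ R) : Prop :=
  ∀ γ, x.coeff γ ≠ y.coeff γ → ∀ δ ∈ x.support, δ < γ

namespace IsTruncation

section Zero

variable [Zero R] {x y z : HahnSeries Γ R}

theorem coeff_eq_of_le (h : IsTruncation x y) {γ δ : Γ} (hδ : δ ∈ x.support) (hγ : γ ≤ δ) :
    y.coeff γ = x.coeff γ := by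
  by_contra hne
  exact (h γ (Ne.symm hne) δ hδ).not_ge hγ

theorem coeff_eq (h : IsTruncation x y) {γ : Γ} (hγ : γ ∈ x.support) : y.coeff γ = x.coeff γ :=
  h.coeff_eq_of_le hγ le_rfl

theorem support_subset (h : IsTruncation x y) : x.support ⊆ y.support := fun γ hγ => by
  rw [mem_support, h.coeff_eq hγ]
  exact hγ

theorem trans (h : IsTruncation x y) (h' : IsTruncation y z) : IsTruncation x z := by
  intro γ hγ δ hδ
  by_cases hxy : x.coeff γ = y.coeff γ
  · exact h' γ (hxy ▸ hγ) δ (h.support_subset hδ)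
  · exact h γ hxy δ hδ

theorem antisymm (h : IsTruncation x y) (h' : IsTruncation y x) : x = y := by
  ext γ
  by_contra hne
  by_cases hγ : x.coeff γ = 0
  · exact lt_irrefl γ (h' γ (Ne.symm hne) γ (by rw [mem_support, ← hγ]; exact Ne.symm hne))
  · exact lt_irrefl γ (h γ hne γ hγ)

end Zero

section AddGroup

variable [Zero Γ] [AddGroup R] {x y z : HahnSeries Γ R}

theorem lt_order_sub (h : IsTruncation x y) (hne : x ≠ y) {δ : Γ} (hδ : δ ∈ x.support) :
    δ < (y - x).order := by
  refine h _ (fun hxy => coeff_order_eq_zero.not.2 (sub_ne_zero.2 hne.symm) ?_) δ hδ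
  rw [coeff_sub, hxy, sub_self]

theorem order_sub_mem_support (h : IsTruncation x y) (hne : x ≠ y) :
    (y - x).order ∈ y.support := by
  have hx : x.coeff (y - x).order = 0 := by
    by_contra hx
    exact lt_irrefl _ (h.lt_order_sub hne hx)
  have hyx := coeff_order_eq_zero.not.2 (sub_ne_zero.2 hne.symm)
  rwa [coeff_sub, hx, sub_zero] at hyx

theorem order_sub_eq (h : IsTruncation x y) (h' : IsTruncation y z) (hne : x ≠ y) :
    (z - x).order = (y - x).order := by
  rcases eq_or_ne y z with rfl | hne'
  · rfl
  have hzx : z - x ≠ 0 := sub_ne_zero.2 fun hzx => hne (h.antisymm (hzx ▸ h'))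
  have hlt : (y - x).orderTop < (z - y).orderTop := by
    rw [← order_eq_orderTop_of_ne_zero (sub_ne_zero.2 hne.symm),
      ← order_eq_orderTop_of_ne_zero (sub_ne_zero.2 hne'.symm), WithTop.coe_lt_coe]
    exact h'.lt_order_sub hne' (h.order_sub_mem_support hne)
  apply WithTop.coe_injective
  rw [order_eq_orderTop_of_ne_zero hzx, order_eq_orderTop_of_ne_zero (sub_ne_zero.2 hne.symm),
    ← sub_add_sub_cancel z y x, orderTop_add_eq_right hlt]

end AddGroup

end IsTruncation

theorem exists_isTruncation_upperBound [Zero R] {C : Set (HahnSeries Γ R)}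
    (hC : IsChain IsTruncation C) :
    ∃ ℓ : HahnSeries Γ R,
      (∀ x ∈ C, IsTruncation x ℓ) ∧ ∀ γ ∈ ℓ.support, ∃ x ∈ C, γ ∈ x.support := by
  classical
  have hagree : ∀ x ∈ C, ∀ y ∈ C, ∀ {γ δ}, γ ∈ y.support → δ ∈ x.support → γ ≤ δ →
      y.coeff γ = x.coeff γ := by
    intro x hx y hy γ δ hγ hδ hγδ
    rcases eq_or_ne x y with rfl | hne
    · rfl
    rcases hC hx hy hne with h | h
    · exact h.coeff_eq_of_le hδ hγδ
    · exact (h.coeff_eq hγ).symm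
  let f : Γ → R := fun γ => if h : ∃ x ∈ C, γ ∈ x.support then h.choose.coeff γ else 0
  have hf : ∀ x ∈ C, ∀ {γ δ}, δ ∈ x.support → γ ≤ δ → f γ = x.coeff γ := by
    intro x hx γ δ hδ hγδ
    by_cases h : ∃ x ∈ C, γ ∈ x.support
    · simp only [f, dif_pos h]
      exact hagree x hx _ h.choose_spec.1 h.choose_spec.2 hδ hγδ
    · simp only [f, dif_neg h]
      by_contra hne
      exact h ⟨x, hx, Ne.symm hne⟩
  have hsupp : ∀ γ, f γ ≠ 0 → ∃ x ∈ C, γ ∈ x.support := by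
    intro γ hγ
    by_contra h
    simp only [f, dif_neg h] at hγ
    exact hγ rfl
  have hwf : (Function.support f).IsWF := by
    rw [Set.isWF_iff_no_descending_seq]
    intro g hg hmem
    obtain ⟨x, hx, hx0⟩ := hsupp _ (hmem 0)
    refine Set.isWF_iff_no_descending_seq.1 x.isWF_support g hg fun n => ?_
    rw [mem_support, ← hf x hx hx0 (hg.antitone (Nat.zero_le n))]
    exact hmem n
  refine ⟨⟨f, hwf.isPWO⟩, fun x hx γ hγ δ hδ => ?_, fun γ hγ => hsupp γ hγ⟩
  by_contra hle
  exact hγ (hf x hx hδ (not_lt.1 hle)).symm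

end Truncation

end HahnSeries

namespace HahnEmbeddingData

variable {Φ : Type*} [LinearOrder Φ] {Γ : Type*} [AddCommGroup Γ] [LinearOrder Γ]
  [IsOrderedAddMonoid Γ] (H : HahnEmbeddingData Φ Γ) {x y : Γ}

noncomputable def lead (γ : Γ) : WithTop Φ := (H.e γ).orderTop

theorem lead_eq_top_iff : H.lead x = ⊤ ↔ x = 0 := by
  rw [lead, orderTop_eq_top, map_eq_zero_iff _ H.inj]

theorem lead_zero : H.lead 0 = ⊤ := H.lead_eq_top_iff.2 rfl

theorem lead_neg : H.lead (-x) = H.lead x := by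
  rw [lead, lead, map_neg, orderTop_neg]

theorem lead_b (φ : Φ) : H.lead (H.b φ) = φ := by
  rw [lead, H.hb, orderTop_single one_ne_zero]

theorem lead_add_of_lt (h : H.lead x < H.lead y) : H.lead (x + y) = H.lead x := by
  rw [lead, map_add, orderTop_add_eq_left h]; rfl

theorem lead_sub_of_lt (h : H.lead x < H.lead y) : H.lead (x - y) = H.lead x := by
  rw [sub_eq_add_neg, H.lead_add_of_lt (by rwa [lead_neg])]

theorem pos_iff : 0 < x ↔ 0 < (H.e x).leadingCoeff := (H.ord x).trans lexPos_iff

theorem b_pos (φ : Φ) : 0 < H.b φ := by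
  rw [H.pos_iff, H.hb, leadingCoeff_of_single]
  exact one_pos

theorem lt_of_lead_lt (hx : 0 < x) (h : H.lead x < H.lead y) : y < x := by
  rw [← sub_pos, H.pos_iff, map_sub, leadingCoeff_sub h]
  exact H.pos_iff.1 hx

theorem lead_add_le (hx : 0 ≤ x) (hy : 0 ≤ y) : H.lead (x + y) ≤ H.lead x := by
  rcases hx.eq_or_lt with rfl | hx
  · rw [lead_zero]
    exact le_top
  by_contra h
  exact (H.lt_of_lead_lt hx (not_le.1 h)).not_ge (le_add_of_nonneg_right hy)

theorem b_strictAnti : StrictAnti H.b := fun ψ φ h =>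
  H.lt_of_lead_lt (H.b_pos ψ) (by rw [lead_b, lead_b]; exact WithTop.coe_lt_coe.2 h)

theorem nsmul_b_lt_b {ψ φ : Φ} (h : ψ < φ) (n : ℕ) : n • H.b φ < H.b ψ := by
  refine H.lt_of_lead_lt (H.b_pos ψ) ?_
  calc (H.lead (H.b ψ)) = ψ := H.lead_b ψ
    _ < φ := WithTop.coe_lt_coe.2 h
    _ = H.lead (H.b φ) := (H.lead_b φ).symm
    _ ≤ H.lead (n • H.b φ) := by
      rw [lead, lead, map_nsmul]
      exact orderTop_le_orderTop_smul n _

theorem not_archEquiv_b {ψ φ : Φ} (h : ψ < φ) : ¬ ArchEquiv (H.b ψ) (H.b φ) := by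
  rintro ⟨n, hn, -⟩
  rw [abs_of_pos (H.b_pos ψ), abs_of_pos (H.b_pos φ)] at hn
  exact hn.not_gt (H.nsmul_b_lt_b h n)

end HahnEmbeddingData

section DerivValue

open HahnEmbeddingData

variable {Φ : Type*} [LinearOrder Φ] {Γ : Type*} [AddCommGroup Γ] [LinearOrder Γ]
  [IsOrderedAddMonoid Γ] (H : HahnEmbeddingData Φ Γ) (θ : Φ → Γ)

/-- `δ = γ + θ_ψ` with `ψ` the archimedean class of some `γ ≠ 0`, i.e. `δ = v(d(t^γ))`. -/
def IsDerivValue (δ : Γ) : Prop := ∃ ψ : Φ, H.lead (δ - θ ψ) = ψ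

variable {H θ} {δ : Γ}
-- a consequence of (HD3), see `IsHardySeriesDerivation.lead_theta_sub_gt`
variable (hgap : ∀ ψ φ : Φ, ψ < φ → (ψ : WithTop Φ) < H.lead (θ φ - θ ψ))
include hgap

theorem isDerivValue_of_lead_le {ψ : Φ} (h : H.lead (δ - θ ψ) ≤ ψ) : IsDerivValue H θ δ := by
  obtain ⟨χ, hχ⟩ := WithTop.ne_top_iff_exists.1 (ne_top_of_le_ne_top WithTop.coe_ne_top h)
  have hχψ : χ ≤ ψ := WithTop.coe_le_coe.1 (hχ ▸ h)
  have hgapχ : (χ : WithTop Φ) < H.lead (θ ψ - θ χ) := by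
    rcases hχψ.eq_or_lt with rfl | hlt
    · rw [sub_self, lead_zero]
      exact WithTop.coe_lt_top χ
    · exact hgap χ ψ hlt
  refine ⟨χ, ?_⟩
  rw [show δ - θ χ = (δ - θ ψ) + (θ ψ - θ χ) by abel, H.lead_add_of_lt (hχ ▸ hgapχ), hχ]

theorem isDerivValue_of_upperBound_lt {u : Γ} (hu : ∀ φ, θ φ ≤ u) (hδ : u < δ) :
    IsDerivValue H θ δ := by
  obtain ⟨ρ, hρ⟩ := WithTop.ne_top_iff_exists.1
    ((H.lead_eq_top_iff).not.2 (sub_pos.2 hδ).ne')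
  refine isDerivValue_of_lead_le hgap (ψ := ρ) ?_
  rw [show δ - θ ρ = (δ - u) + (u - θ ρ) by abel, hρ]
  exact H.lead_add_le (sub_pos.2 hδ).le (sub_nonneg.2 (hu ρ))

theorem isDerivValue_of_lt (hmono : Monotone θ) {φ : Φ} (hδ : δ < θ φ) : IsDerivValue H θ δ := by
  rcases le_or_gt (H.lead (δ - θ φ)) φ with h | h
  · exact isDerivValue_of_lead_le hgap h
  obtain ⟨ρ, hρ⟩ := WithTop.ne_top_iff_exists.1
    ((H.lead_eq_top_iff).not.2 (sub_neg.2 hδ).ne)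
  have hφρ : φ ≤ ρ := (WithTop.coe_lt_coe.1 (hρ ▸ h)).le
  refine isDerivValue_of_lead_le hgap (ψ := ρ) ?_
  calc H.lead (δ - θ ρ) = H.lead ((θ φ - δ) + (θ ρ - θ φ)) := by
        rw [← H.lead_neg]; congr 1; abel
    _ ≤ H.lead (θ φ - δ) := H.lead_add_le (sub_pos.2 hδ).le (sub_nonneg.2 (hmono hφρ))
    _ = ρ := by rw [← neg_sub, H.lead_neg, hρ]

theorem isDerivValue_of_not_isLUB (hmono : Monotone θ) (h : ¬ IsLUB (Set.range θ) δ) :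
    IsDerivValue H θ δ := by
  by_cases hub : δ ∈ upperBounds (Set.range θ)
  · obtain ⟨u, hu, hδu⟩ : ∃ u ∈ upperBounds (Set.range θ), u < δ := by
      by_contra! hle
      exact h ⟨hub, hle⟩
    exact isDerivValue_of_upperBound_lt hgap (fun φ => hu ⟨φ, rfl⟩) hδu
  · obtain ⟨_, ⟨φ, rfl⟩, hφ⟩ := not_forall₂.1 hub
    exact isDerivValue_of_lt hgap hmono (not_le.1 hφ)

theorem not_isDerivValue_of_isLUB (hmono : Monotone θ) (h : IsLUB (Set.range θ) δ) :
    ¬ IsDerivValue H θ δ := by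
  rintro ⟨ψ, hψ⟩
  have hγ : 0 < δ - θ ψ := lt_of_le_of_ne (sub_nonneg.2 (h.1 ⟨ψ, rfl⟩))
    (Ne.symm ((H.lead_eq_top_iff).not.1 (hψ ▸ WithTop.coe_ne_top)))
  by_cases hmax : ∃ φ, ψ < φ
  · obtain ⟨φ, hψφ⟩ := hmax
    have hlt : H.lead (δ - θ ψ) < H.lead (H.b φ) := by
      rw [hψ, H.lead_b]; exact WithTop.coe_lt_coe.2 hψφ
    have hub : δ - H.b φ ∈ upperBounds (Set.range θ) := by
      rintro _ ⟨φ', rfl⟩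
      have hbφ : H.b φ < δ - θ ψ := H.lt_of_lead_lt hγ hlt
      rcases le_or_gt φ' ψ with hφ' | hφ'
      · exact (hmono hφ').trans (le_sub_comm.2 hbφ.le)
      · have : θ φ' - θ ψ < δ - θ ψ - H.b φ :=
          H.lt_of_lead_lt (sub_pos.2 hbφ) (by rw [H.lead_sub_of_lt hlt, hψ]; exact hgap ψ φ' hφ')
        rw [sub_right_comm] at this
        exact ((sub_lt_sub_iff_right _).1 this).le
    exact (H.b_pos φ).not_ge ((le_sub_self_iff _).1 (h.2 hub))
  · push Not at hmax
    exact hγ.not_ge (sub_nonpos.2 (h.2 fun _ ⟨φ, hφ⟩ => hφ ▸ hmono (hmax φ)))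

end DerivValue

section Integration

variable {Γ : Type*} [AddCommGroup Γ] [LinearOrder Γ] {k : Type*} [Field k]

namespace HDtwo

variable {D : HahnSeries Γ k → HahnSeries Γ k} (hD : HDtwo D)
include hD

theorem orderTop_eq_orderTop_single {x : HahnSeries Γ k} (hx : x ≠ 0) (ho : x.order ≠ 0) :
    (D x).orderTop = (D (single x.order 1)).orderTop := by
  have hs : single x.order (1 : k) ≠ 0 := single_ne_zero one_ne_zero
  have hso : (single x.order (1 : k)).order ≠ 0 := by rwa [order_single one_ne_zero]
  have hxs : x.orderTop = (single x.order (1 : k)).orderTop := by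
    rw [orderTop_single one_ne_zero, order_eq_orderTop_of_ne_zero hx]
  exact le_antisymm ((hD _ _ hx hs ho hso).1 hxs.le) ((hD _ _ hs hx hso ho).1 hxs.ge)

theorem orderTop_single_le_iff {γ γ' : Γ} (hγ : γ ≠ 0) (hγ' : γ' ≠ 0) :
    (D (single γ 1)).orderTop ≤ (D (single γ' 1)).orderTop ↔ γ ≤ γ' := by
  have h := hD (single γ (1 : k)) (single γ' 1) (single_ne_zero one_ne_zero)
    (single_ne_zero one_ne_zero) (by rwa [order_single one_ne_zero])
    (by rwa [order_single one_ne_zero])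
  rwa [orderTop_single one_ne_zero, orderTop_single one_ne_zero, WithTop.coe_le_coe,
    Iff.comm] at h

theorem orderTop_single_lt_iff {γ γ' : Γ} (hγ : γ ≠ 0) (hγ' : γ' ≠ 0) :
    (D (single γ 1)).orderTop < (D (single γ' 1)).orderTop ↔ γ < γ' :=
  lt_iff_lt_of_le_iff_le (hD.orderTop_single_le_iff hγ' hγ)

end HDtwo

/-- The second condition makes the error `a - D b₀` of every proper truncation `b₀` of `b` equal
to the derivative of the first monomial of `b` that `b₀` omits (`IsTruncation.orderTop_sub_map_eq`),
which lets the invariant pass to limits of chains. -/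
def IsPartialIntegral (D : HahnSeries Γ k → HahnSeries Γ k) (a b : HahnSeries Γ k) : Prop :=
  a.orderTop ≤ (a - D b).orderTop ∧
    ∀ γ ∈ b.support, γ ≠ 0 ∧ (D (single γ 1)).orderTop < (a - D b).orderTop

variable {D : HahnSeries Γ k →+ HahnSeries Γ k} (hD : HDtwo D) {a : HahnSeries Γ k}
include hD

theorem HahnSeries.IsTruncation.orderTop_sub_map_eq {b b' : HahnSeries Γ k} (h : IsTruncation b b')
    (hne : b ≠ b') (hb' : IsPartialIntegral D a b') :
    (a - D b).orderTop = (D (single (b' - b).order 1)).orderTop := by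
  obtain ⟨hγ0, hγlt⟩ := hb'.2 _ (h.order_sub_mem_support hne)
  have hDγ := hD.orderTop_eq_orderTop_single (sub_ne_zero.2 hne.symm) hγ0
  rw [show a - D b = (a - D b') + D (b' - b) by rw [map_sub]; abel,
    orderTop_add_eq_right (hDγ ▸ hγlt), hDγ]

theorem exists_isPartialIntegral_upperBound {C : Set (HahnSeries Γ k)}
    (hCM : ∀ b ∈ C, IsPartialIntegral D a b) (hC : IsChain IsTruncation C) (hCne : C.Nonempty) :
    ∃ ℓ, IsPartialIntegral D a ℓ ∧ ∀ b ∈ C, IsTruncation b ℓ := by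
  obtain ⟨ℓ, hub, hsupp⟩ := exists_isTruncation_upperBound hC
  have hmono : ∀ b ∈ C, (a - D b).orderTop ≤ (a - D ℓ).orderTop := by
    intro b hb
    rcases eq_or_ne b ℓ with rfl | hne
    · exact le_rfl
    have hγ := (hub b hb).order_sub_mem_support hne
    have hγb : (ℓ - b).order ∉ b.support := fun h => lt_irrefl _ ((hub b hb).lt_order_sub hne h)
    obtain ⟨b', hb', hγb'⟩ := hsupp _ hγ
    have hbb' : b ≠ b' := by rintro rfl; exact hγb hγb'
    have htr : IsTruncation b b' :=
      (hC hb hb' hbb').resolve_right fun h => hγb (h.support_subset hγb')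
    have hord := htr.order_sub_eq (hub b' hb') hbb'
    have herr := htr.orderTop_sub_map_eq hD hbb' (hCM b' hb')
    have hDℓ := hD.orderTop_eq_orderTop_single (sub_ne_zero.2 hne.symm) (hCM b' hb' |>.2 _ hγb').1
    rw [← hord] at herr
    calc (a - D b).orderTop = min (a - D b).orderTop (D (ℓ - b)).orderTop := by
          rw [hDℓ, herr, min_self]
      _ ≤ (a - D ℓ).orderTop := by
          rw [show a - D ℓ = (a - D b) - D (ℓ - b) by rw [map_sub]; abel]
          exact min_orderTop_le_orderTop_sub
  refine ⟨ℓ, ⟨?_, fun γ hγ => ?_⟩, hub⟩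
  · obtain ⟨b, hb⟩ := hCne
    exact (hCM b hb).1.trans (hmono b hb)
  · obtain ⟨b, hb, hγb⟩ := hsupp γ hγ
    obtain ⟨hγ0, hlt⟩ := (hCM b hb).2 γ hγb
    exact ⟨hγ0, hlt.trans_le (hmono b hb)⟩

theorem IsPartialIntegral.exists_extension
    (hsmul : ∀ γ (c : k), D (single γ c) = c • D (single γ 1)) {b : HahnSeries Γ k}
    (hb : IsPartialIntegral D a b) (herr : a - D b ≠ 0)
    (hsol : ∃ γ ≠ 0, (D (single γ 1)).orderTop = (a - D b).orderTop) :
    ∃ b', IsPartialIntegral D a b' ∧ IsTruncation b b' ∧ b ≠ b' := by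
  obtain ⟨γ, hγ0, hγ⟩ := hsol
  set e := a - D b
  have hDγ : D (single γ 1) ≠ 0 := by
    rw [← orderTop_ne_top, hγ, orderTop_ne_top]
    exact herr
  set c := e.leadingCoeff / (D (single γ 1)).leadingCoeff
  have hc : c ≠ 0 := div_ne_zero (leadingCoeff_ne_zero.2 herr) (leadingCoeff_ne_zero.2 hDγ)
  have he' : e.orderTop < (a - D (b + single γ c)).orderTop := by
    rw [map_add, hsmul, sub_add_eq_sub_sub, ← order_eq_orderTop_of_ne_zero herr]
    refine le_orderTop_of_leadingCoeff_eq (order_eq_orderTop_of_ne_zero herr).symm ?_ ?_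
    · rw [orderTop_smul_of_ne_zero hc, hγ, order_eq_orderTop_of_ne_zero herr]
    · rw [leadingCoeff_smul, div_mul_cancel₀ _ (leadingCoeff_ne_zero.2 hDγ)]
  have hlt : ∀ η ∈ b.support, η < γ := fun η hη =>
    (hD.orderTop_single_lt_iff (hb.2 η hη).1 hγ0).1 (hγ ▸ (hb.2 η hη).2)
  refine ⟨b + single γ c, ⟨hb.1.trans he'.le, fun η hη => ?_⟩, fun η hη δ hδ => ?_, ?_⟩
  · rcases eq_or_ne η γ with rfl | hηγ
    · exact ⟨hγ0, hγ ▸ he'⟩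
    · have hηb : η ∈ b.support := by
        rwa [mem_support, coeff_add, coeff_single_of_ne hηγ, add_zero] at hη
      exact ⟨(hb.2 η hηb).1, (hb.2 η hηb).2.trans he'⟩
  · rcases eq_or_ne η γ with rfl | hηγ
    · exact hlt δ hδ
    · rw [coeff_add, coeff_single_of_ne hηγ, add_zero] at hη
      exact absurd rfl hη
  · exact fun h => single_ne_zero hc (left_eq_add.1 h)

theorem exists_map_eq_of_forall_exists_orderTop_map_single_eq
    (hsmul : ∀ γ (c : k), D (single γ c) = c • D (single γ 1))
    (hsol : ∀ δ : Γ, a.orderTop ≤ δ → ∃ γ ≠ 0, (D (single γ 1)).orderTop = δ) :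
    ∃ b, D b = a := by
  have h0 : IsPartialIntegral D a 0 := ⟨by rw [map_zero, sub_zero], fun γ hγ => absurd rfl hγ⟩
  have : Nonempty {b // IsPartialIntegral D a b} := ⟨⟨0, h0⟩⟩
  obtain ⟨⟨m, hm⟩, hmax⟩ := exists_maximal_of_nonempty_chains_bounded
    (r := fun p q : {b // IsPartialIntegral D a b} => IsTruncation p.1 q.1)
    (fun c hc hcne => by
      obtain ⟨ℓ, hℓ, hub⟩ := exists_isPartialIntegral_upperBound hD (C := Subtype.val '' c)
        (by rintro _ ⟨p, -, rfl⟩; exact p.2)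
        (hc.image_of_map_rel _ _ Subtype.val fun _ _ h => h) (hcne.image _)
      exact ⟨⟨ℓ, hℓ⟩, fun p hp => hub p.1 ⟨p, hp, rfl⟩⟩)
    (fun hpq hqr => hpq.trans hqr)
  refine ⟨m, (sub_eq_zero.1 (by_contra fun herr => ?_)).symm⟩
  obtain ⟨b', hb', hmb', hne⟩ := hm.exists_extension hD hsmul herr (by
    rw [← order_eq_orderTop_of_ne_zero herr]
    exact hsol _ (order_eq_orderTop_of_ne_zero herr ▸ hm.1))
  exact hne (hmb'.antisymm (hmax ⟨b', hb'⟩ hmb'))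

end Integration

section HardyDerivation

open HahnEmbeddingData

variable {Φ : Type*} [LinearOrder Φ] {Γ : Type*} [AddCommGroup Γ] [LinearOrder Γ]
  [IsOrderedAddMonoid Γ] {k : Type*} [Field k] {H : HahnEmbeddingData Φ Γ} {ι : ℝ →+* k}
  {D : HahnSeries Γ k → HahnSeries Γ k}

namespace IsSeriesDerivation

variable (hD : IsSeriesDerivation H ι D)
include hD

theorem map_zero : D 0 = 0 := by
  have h := hD.map_add 0 0
  rwa [add_zero, left_eq_add] at h

theorem map_one : D 1 = 0 := by
  have h := hD.leibniz 1 1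
  rwa [mul_one, one_mul, mul_one, left_eq_add] at h

theorem map_single (γ : Γ) (c : k) : D (single γ c) = c • D (single γ 1) := by
  obtain ⟨s, hs, hDs⟩ := hD.strong_linear (single γ c)
  ext δ
  rw [hDs, SummableFamily.coeff_hsum, finsum_eq_single _ γ, hs, coeff_single_same]
  intro x hx
  rw [hs x, coeff_single_of_ne hx, zero_smul, coeff_zero]

def toAddMonoidHom : HahnSeries Γ k →+ HahnSeries Γ k := AddMonoidHom.mk' D hD.map_add

theorem exists_ne_zero_map_eq {a : HahnSeries Γ k} (h : ∃ b, D b = a) : ∃ b, b ≠ 0 ∧ D b = a := by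
  obtain ⟨b, hb⟩ := h
  rcases eq_or_ne b 0 with rfl | hb0
  · exact ⟨1, one_ne_zero, by rw [hD.map_one, ← hb, hD.map_zero]⟩
  · exact ⟨b, hb0, hb⟩

theorem coeff_map_single (γ δ : Γ) :
    (D (single γ 1)).coeff δ = ∑ᶠ φ, ι ((H.e γ).coeff φ) * (logDer H D φ).coeff (δ - γ) := by
  obtain ⟨s, hs, hDs⟩ := hD.strong_leibniz γ
  rw [hDs, SummableFamily.coeff_hsum]
  refine finsum_congr fun φ => ?_
  have h := coeff_single_mul_add (r := (1 : k)) (x := logDer H D φ) (a := δ - γ) (b := γ)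
  rw [sub_add_cancel, one_mul] at h
  rw [hs φ, coeff_smul, smul_eq_mul, h]

end IsSeriesDerivation

namespace IsHardySeriesDerivation

variable (hD : IsHardySeriesDerivation H ι D)
include hD

theorem exists_orderTop_map_single_eq {a b : HahnSeries Γ k} (hb : D b = a) (ha : a ≠ 0) :
    ∃ γ ≠ 0, (D (single γ 1)).orderTop = a.orderTop := by
  obtain ⟨b', hb'0, hb'o, rfl⟩ : ∃ b', b' ≠ 0 ∧ b'.order ≠ 0 ∧ D b' = a := by
    by_cases hbo : b.order = 0
    · have hb1 : b ∈ {x : HahnSeries Γ k | 0 ≤ x.orderTop} := zero_le_orderTop_iff.2 hbo.ge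
      rw [hD.2.1] at hb1
      obtain ⟨c, m, hc, hm, rfl⟩ := hb1
      have hDm : D m = a := by rw [← hb, hD.1.map_add, hc, zero_add]
      have hm0 : m ≠ 0 := by
        rintro rfl
        exact ha (by rw [← hDm, hD.1.map_zero])
      exact ⟨m, hm0, ((zero_lt_orderTop_iff hm0).1 hm).ne', hDm⟩
    · exact ⟨b, fun h => hbo (h ▸ order_zero), hbo, hb⟩
  exact ⟨b'.order, hb'o, (hD.2.2.1.orderTop_eq_orderTop_single hb'0 hb'o).symm⟩

variable {θ : Φ → Γ} (hθ : ∀ φ, (logDer H D φ).orderTop = θ φ)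
include hθ

theorem theta_strictMono : StrictMono θ := by
  intro ψ φ hψφ
  have hbψ := H.b_pos ψ
  have hbφ := H.b_pos φ
  have h3 := hD.2.2.2 (tmon H k ψ) (tmon H k φ) (single_ne_zero one_ne_zero)
    (single_ne_zero one_ne_zero)
    (by simp only [tmon, order_single one_ne_zero, abs_of_pos hbψ, abs_of_pos hbφ]
        exact H.b_strictAnti hψφ)
    (by simp only [tmon, order_single one_ne_zero, abs_of_pos hbφ]; exact hbφ)
  have hle : (logDer H D ψ).orderTop ≤ (logDer H D φ).orderTop := h3.1
  rw [hθ, hθ, WithTop.coe_le_coe] at hle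
  refine hle.lt_of_ne fun heq => H.not_archEquiv_b hψφ ?_
  have harch := h3.2.1 (show (logDer H D ψ).orderTop = (logDer H D φ).orderTop by rw [hθ, hθ, heq])
  simpa only [tmon, order_single one_ne_zero] using harch

theorem orderTop_map_single {γ : Γ} {ψ : Φ} (hψ : H.lead γ = ψ) :
    (D (single γ 1)).orderTop = ↑(γ + θ ψ) := by
  have hlead : ∀ φ, (H.e γ).coeff φ ≠ 0 → ψ ≤ φ := fun φ hφ =>
    WithTop.coe_le_coe.1 (hψ ▸ orderTop_le_of_coeff_ne_zero hφ)
  have hlog : ∀ φ {ζ}, ζ < θ φ → (logDer H D φ).coeff ζ = 0 := fun φ _ hζ =>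
    coeff_eq_zero_of_lt_orderTop (by rw [hθ]; exact WithTop.coe_lt_coe.2 hζ)
  have hmono := hD.theta_strictMono hθ
  refine orderTop_eq_of_coeff_ne_zero ?_ fun δ hδ => ?_
  · rw [hD.1.coeff_map_single, add_sub_cancel_left, finsum_eq_single _ ψ]
    · exact mul_ne_zero ((map_ne_zero ι).2 (coeff_orderTop_ne hψ)) (coeff_orderTop_ne (hθ ψ))
    · intro φ hφ
      by_cases hc : (H.e γ).coeff φ = 0
      · rw [hc, map_zero, zero_mul]
      · rw [hlog φ (hmono ((hlead φ hc).lt_of_ne (Ne.symm hφ))), mul_zero]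
  · rw [hD.1.coeff_map_single]
    refine finsum_eq_zero_of_forall_eq_zero fun φ => ?_
    by_cases hc : (H.e γ).coeff φ = 0
    · rw [hc, map_zero, zero_mul]
    · refine mul_eq_zero_of_right _ (hlog φ ?_)
      calc δ - γ < θ ψ := sub_lt_iff_lt_add'.2 hδ
        _ ≤ θ φ := hmono.monotone (hlead φ hc)

theorem isDerivValue_iff {δ : Γ} :
    IsDerivValue H θ δ ↔ ∃ γ ≠ 0, (D (single γ 1)).orderTop = δ := by
  constructor
  · rintro ⟨ψ, hψ⟩
    exact ⟨δ - θ ψ, H.lead_eq_top_iff.not.1 (hψ ▸ WithTop.coe_ne_top),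
      by rw [hD.orderTop_map_single hθ hψ, sub_add_cancel]⟩
  · rintro ⟨γ, hγ, hγδ⟩
    obtain ⟨ψ, hψ⟩ := WithTop.ne_top_iff_exists.1 (H.lead_eq_top_iff.not.2 hγ)
    rw [hD.orderTop_map_single hθ hψ.symm, WithTop.coe_inj] at hγδ
    exact ⟨ψ, by rw [← hγδ, add_sub_cancel_right, hψ]⟩

theorem theta_sub_le_iff {ψ φ : Φ} (hψφ : ψ < φ) {η : Γ} (hη : H.lead η = ψ) :
    θ φ - θ ψ ≤ η ↔ 0 ≤ η := by
  have hlead : H.lead (η + H.b φ) = ψ := by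
    rw [H.lead_add_of_lt (by rw [hη, H.lead_b]; exact WithTop.coe_lt_coe.2 hψφ), hη]
  have h := hD.2.2.1.orderTop_single_le_iff (H.b_pos φ).ne'
    (H.lead_eq_top_iff.not.1 (hlead ▸ WithTop.coe_ne_top))
  rw [hD.orderTop_map_single hθ (H.lead_b φ), hD.orderTop_map_single hθ hlead,
    WithTop.coe_le_coe, le_add_iff_nonneg_left, show η + H.b φ + θ ψ = H.b φ + (η + θ ψ) by abel,
    add_le_add_iff_left] at h
  rw [← h, sub_le_iff_le_add]

theorem lead_theta_sub_gt {ψ φ : Φ} (hψφ : ψ < φ) : (ψ : WithTop Φ) < H.lead (θ φ - θ ψ) := by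
  have hε : 0 < θ φ - θ ψ := sub_pos.2 (hD.theta_strictMono hθ hψφ)
  by_contra! hle
  obtain ⟨η, hη, hη0, hηε⟩ : ∃ η, H.lead η = ψ ∧ 0 ≤ η ∧ η < θ φ - θ ψ := by
    rcases hle.lt_or_eq with hlt | heq
    · exact ⟨H.b ψ, H.lead_b ψ, (H.b_pos ψ).le,
        H.lt_of_lead_lt hε (by rwa [H.lead_b])⟩
    · have hlt : H.lead (θ φ - θ ψ) < H.lead (H.b φ) := by
        rw [heq, H.lead_b]; exact WithTop.coe_lt_coe.2 hψφ
      exact ⟨θ φ - θ ψ - H.b φ, by rw [H.lead_sub_of_lt hlt, heq],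
        sub_nonneg.2 (H.lt_of_lead_lt hε hlt).le, sub_lt_self _ (H.b_pos φ)⟩
  exact hηε.not_ge ((hD.theta_sub_le_iff hθ hψφ hη).2 hη0)

end IsHardySeriesDerivation

end HardyDerivation

/-- let `k((Γ))` carry a series derivation of Hardy type `d`, with
`θ_φ = v(d(t_φ)/t_φ)` and `θ̃ = l.u.b.{θ_φ : φ ∈ Φ}` (a priori in the Dedekind completion
of `Γ`).  Then every series `a` with `v(a) > θ̃` admits an integral, and `k((Γ))` is closed
under integration if and only if `θ̃ ∉ Γ`. -/
theorem integration_in_hahn_series {Φ : Type*} [LinearOrder Φ]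
    {Γ : Type*} [AddCommGroup Γ] [LinearOrder Γ] [IsOrderedAddMonoid Γ] {k : Type*} [Field k]
    (H : HahnEmbeddingData Φ Γ) (ι : ℝ →+* k)
    (D : HahnSeries Γ k → HahnSeries Γ k) (hD : IsHardySeriesDerivation H ι D)
    (θ : Φ → Γ) (hθ : ∀ φ, (logDer H D φ).orderTop = ((θ φ : Γ) : WithTop Γ)) :
    (∀ a : HahnSeries Γ k,
      (∀ φ : Φ, ((θ φ : Γ) : WithTop Γ) < a.orderTop) →
      ¬ IsLUB (Set.range fun φ => ((θ φ : Γ) : WithTop Γ)) a.orderTop →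
      ∃ b : HahnSeries Γ k, b ≠ 0 ∧ D b = a) ∧
    ((∀ a : HahnSeries Γ k, ∃ b : HahnSeries Γ k, b ≠ 0 ∧ D b = a) ↔
      ¬ ∃ g : Γ, IsLUB (Set.range θ) g) := by
  have hmono := (hD.theta_strictMono hθ).monotone
  have hgap : ∀ ψ φ : Φ, ψ < φ → (ψ : WithTop Φ) < H.lead (θ φ - θ ψ) :=
    fun _ _ => hD.lead_theta_sub_gt hθ
  have hint : ∀ a : HahnSeries Γ k, (∀ δ : Γ, a.orderTop ≤ δ → ¬ IsLUB (Set.range θ) δ) →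
      ∃ b, b ≠ 0 ∧ D b = a := fun a ha =>
    hD.1.exists_ne_zero_map_eq <|
      exists_map_eq_of_forall_exists_orderTop_map_single_eq (D := hD.1.toAddMonoidHom)
        hD.2.2.1 hD.1.map_single fun δ hδ =>
          (hD.isDerivValue_iff hθ).1 (isDerivValue_of_not_isLUB hgap hmono (ha δ hδ))
  refine ⟨fun a hθa hnot => hint a fun δ hδ hlub => hnot ?_,
    ⟨fun hall ⟨g, hg⟩ => ?_, fun hnl a => hint a fun δ _ hδ => hnl ⟨δ, hδ⟩⟩⟩
  · have hcoe := WithTop.isLUB_range_coe hlub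
    rwa [le_antisymm hδ (hcoe.2 fun _ ⟨φ, hφ⟩ => hφ ▸ (hθa φ).le)]
  · obtain ⟨b, -, hb⟩ := hall (single g 1)
    refine not_isDerivValue_of_isLUB hgap hmono hg ((hD.isDerivValue_iff hθ).2 ?_)
    simpa only [orderTop_single one_ne_zero] using
      hD.exists_orderTop_map_single_eq hb (single_ne_zero one_ne_zero)
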